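/- arXiv:2605.18323 — 8 statements merged into one kernel-verified Lean document; each statement's English description precedes it below -/
import Mathlib

section
/- Let F be a field, let n ≥ 1, and for each i ∈ {1,…,n} let S_i ⊆ F be a finite nonempty set. If f ∈ F[x_1,…,x_n] is a nonzero polynomial such that the degree of f in the variable x_i is strictly less than |S_i| for every i, then there exists a point (s_1,…,s_n) ∈ S_1 × ⋯ × S_n with f(s_1,…,s_n) ≠ 0. -/
open MvPolynomial

theorem grid_combinatorial_nullstellensatz_general
    {F : Type*} [Field F] (n : ℕ)
    (S : Fin n → Finset F)
    (f : MvPolynomial (Fin n) F) (hf : f ≠ 0)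
    (hdeg : ∀ i, f.degreeOf i < (S i).card) :
    ∃ s : Fin n → F, (∀ i, s i ∈ S i) ∧ MvPolynomial.eval s f ≠ 0 := by
  by_contra! hvanish
  exact hf (eq_zero_of_eval_zero_at_prod_finset f S hdeg hvanish)

/-- **Grid form of the Combinatorial Nullstellensatz.**
If `f` is a nonzero multivariate polynomial over a field `F` in `n` variables
whose degree in the variable `x i` is strictly less than `|S i|` for every `i`,
where each `S i` is a finite nonempty subset of `F`, then `f` does not vanish
on all of the grid `S 1 × ⋯ × S n`. -/
theorem grid_combinatorial_nullstellensatz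
    {F : Type*} [Field F] (n : ℕ) (hn : 1 ≤ n)
    (S : Fin n → Finset F) (hS : ∀ i, (S i).Nonempty)
    (f : MvPolynomial (Fin n) F) (hf : f ≠ 0)
    (hdeg : ∀ i, f.degreeOf i < (S i).card) :
    ∃ s : Fin n → F, (∀ i, s i ∈ S i) ∧ MvPolynomial.eval s f ≠ 0 :=
  grid_combinatorial_nullstellensatz_general n S f hf hdeg
end

section
/- Let F be a field, let E be a finite index set of variables, let k ≥ 1, and for each i ∈ {1,…,k} let N_i be a finite nonempty family of nonzero polynomials in the variables (x_e)_{e ∈ E} over F, each of degree at most 1 in every variable. Suppose T is a set of such polynomials with T ∩ N_i ≠ ∅ for every i (a cycle hitting set), and suppose each variable x_e occurs (with degree ≥ 1) in at most W members of T. If S ⊆ F is a finite set with |S| ≥ W + 1, then there exists an assignment x : E → S such that for every i ∈ {1,…,k} there is some l ∈ N_i with l(x) ≠ 0. -/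
/-! The product of the members of `T` has degree at most `W < |S|` in each variable, so by
Alon's Combinatorial Nullstellensatz it does not vanish at some point of `S^E`. There every
member of `T` is nonzero, and `T` meets every `N i`. -/

namespace MvPolynomial

theorem exists_mem_pi_eval_ne_zero {R σ : Type*} [CommRing R] [IsDomain R] [Finite σ]
    {P : MvPolynomial σ R} (hP : P ≠ 0) (S : Finset R) (hdeg : ∀ i, P.degreeOf i < S.card) :
    ∃ x : σ → R, (∀ i, x i ∈ S) ∧ eval x P ≠ 0 := by
  by_contra! h
  exact hP (eq_zero_of_eval_zero_at_prod_finset P (fun _ => S) hdeg h)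

theorem degreeOf_prod_le_card_filter {R σ : Type*} [CommSemiring R]
    (T : Finset (MvPolynomial σ R)) (i : σ) (hT : ∀ l ∈ T, l.degreeOf i ≤ 1) :
    (∏ l ∈ T, l).degreeOf i ≤ (T.filter (fun l => 1 ≤ l.degreeOf i)).card :=
  calc (∏ l ∈ T, l).degreeOf i
      ≤ ∑ l ∈ T, l.degreeOf i := degreeOf_prod_le i T id
    _ ≤ ∑ l ∈ T, if 1 ≤ l.degreeOf i then 1 else 0 :=
        Finset.sum_le_sum fun l hl => by have := hT l hl; split_ifs <;> omega
    _ = (T.filter (fun l => 1 ≤ l.degreeOf i)).card := (Finset.card_filter _ _).symm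

end MvPolynomial

open MvPolynomial

theorem cycle_hitting_set_load_bound_general
    {F : Type*} [Field F] {E : Type*} [Fintype E]
    (k : ℕ)
    (N : Fin k → Finset (MvPolynomial E F))
    (T : Finset (MvPolynomial E F))
    (hT0 : ∀ l ∈ T, l ≠ 0)
    (hTdeg : ∀ l ∈ T, ∀ e : E, l.degreeOf e ≤ 1)
    (hhit : ∀ i, ∃ l, l ∈ T ∧ l ∈ N i)
    (W : ℕ)
    (hW : ∀ e : E, (T.filter (fun l => 1 ≤ l.degreeOf e)).card ≤ W)
    (S : Finset F) (hS : W + 1 ≤ S.card) :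
    ∃ x : E → F, (∀ e, x e ∈ S) ∧
      ∀ i, ∃ l ∈ N i, MvPolynomial.eval x l ≠ 0 := by
  have hdeg (e : E) : (∏ l ∈ T, l).degreeOf e < S.card :=
    calc (∏ l ∈ T, l).degreeOf e
        ≤ (T.filter (fun l => 1 ≤ l.degreeOf e)).card :=
          degreeOf_prod_le_card_filter T e fun l hl => hTdeg l hl e
      _ < S.card := by have := hW e; omega
  obtain ⟨x, hxS, hx⟩ := exists_mem_pi_eval_ne_zero (Finset.prod_ne_zero_iff.mpr hT0) S hdeg
  refine ⟨x, hxS, fun i => ?_⟩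
  obtain ⟨l, hlT, hlN⟩ := hhit i
  rw [map_prod] at hx
  exact ⟨l, hlN, Finset.prod_ne_zero_iff.mp hx l hlT⟩

/-- Theorem 1 (cycle-hitting-set/load-bound sufficient condition), polynomial
form.  For each harmful structure `i` let `N i` be a finite nonempty family of
nonzero polynomials of degree ≤ 1 in every variable (its fundamental-cycle
polynomials).  If `T` is a cycle hitting set (a set of such polynomials meeting
every `N i`) and every variable occurs in at most `W` members of `T`, then for
any finite `S ⊆ F` with `|S| ≥ W + 1` there is an assignment `x : E → S`
making, for every `i`, some member of `N i` nonvanishing. -/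
theorem cycle_hitting_set_load_bound
    {F : Type*} [Field F] {E : Type*} [Fintype E]
    (k : ℕ) (hk : 1 ≤ k)
    (N : Fin k → Finset (MvPolynomial E F))
    (hNne : ∀ i, (N i).Nonempty)
    (hN0 : ∀ i, ∀ l ∈ N i, l ≠ 0)
    (hNdeg : ∀ i, ∀ l ∈ N i, ∀ e : E, l.degreeOf e ≤ 1)
    (T : Finset (MvPolynomial E F))
    (hT0 : ∀ l ∈ T, l ≠ 0)
    (hTdeg : ∀ l ∈ T, ∀ e : E, l.degreeOf e ≤ 1)
    (hhit : ∀ i, ∃ l, l ∈ T ∧ l ∈ N i)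
    (W : ℕ)
    (hW : ∀ e : E, (T.filter (fun l => 1 ≤ l.degreeOf e)).card ≤ W)
    (S : Finset F) (hS : W + 1 ≤ S.card) :
    ∃ x : E → F, (∀ e, x e ∈ S) ∧
      ∀ i, ∃ l ∈ N i, MvPolynomial.eval x l ≠ 0 :=
  cycle_hitting_set_load_bound_general k N T hT0 hTdeg hhit W hW S hS
end

section
/- Let γ ≥ 2 and κ ≥ 2 be integers and let S ⊆ ℤ be a finite set with |S| ≥ (γ−1)(κ−1) + 1. Then there exists a function P : {0,…,γ−1} × {0,…,κ−1} → S such that for all i1 ≠ i2 in {0,…,γ−1} and all j1 ≠ j2 in {0,…,κ−1}, P(i1,j1) + P(i2,j2) ≠ P(i1,j2) + P(i2,j1). -/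
/-!
Fill the matrix greedily, row by row and, within a row, column by column. For `i₂ < i₁` and
`j₂ < j₁` the 4-cycle through `(i₁, j₁)` is active only if `P i₁ j₁` equals
`P i₁ j₂ + P i₂ j₁ - P i₂ j₂`, a value fixed by earlier entries. So entry `(i, j)` has to avoid at
most `i * j ≤ (γ - 1) * (κ - 1)` values, and `S` is large enough to always leave a choice.
-/

open Finset

section Greedy

variable {G : Type*} [AddGroup G] [DecidableEq G]

theorem exists_mem_forall_sub_notMem (S : Finset G) (x : ℕ → G) (D : ℕ → Finset G) (m n : ℕ)
    (hD : ∀ j < n, #(D j) ≤ m) (hS : n * m < #S) :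
    ∃ v ∈ S, ∀ j < n, v - x j ∉ D j := by
  let forbidden := (range n).biUnion fun j => (D j).image (· + x j)
  have hcard : #forbidden < #S :=
    (card_biUnion_le_card_mul _ _ m fun j hj =>
      card_image_le.trans (hD j (mem_range.mp hj))).trans_lt (by simpa using hS)
  obtain ⟨v, hvS, hv⟩ := exists_mem_notMem_of_card_lt_card hcard
  refine ⟨v, hvS, fun j hj hvD => hv ?_⟩
  exact mem_biUnion.mpr ⟨j, mem_range.mpr hj, mem_image.mpr ⟨v - x j, hvD, sub_add_cancel v (x j)⟩⟩

theorem exists_seq_forall_sub_notMem (S : Finset G) (D : ℕ → ℕ → Finset G) (m n : ℕ)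
    (hD : ∀ j j', #(D j j') ≤ m) (hS : (n - 1) * m < #S) :
    ∃ x : ℕ → G, ∀ j < n, x j ∈ S ∧ ∀ j' < j, x j - x j' ∉ D j j' := by
  induction n with
  | zero => exact ⟨0, fun j hj => absurd hj j.not_lt_zero⟩
  | succ n ih =>
    obtain ⟨x, hx⟩ := ih (lt_of_le_of_lt (Nat.mul_le_mul_right m (Nat.sub_le n 1)) hS)
    obtain ⟨v, hvS, hv⟩ := exists_mem_forall_sub_notMem S x (D n) m n (fun j _ => hD n j) hS
    refine ⟨Function.update x n v, fun j hj => ?_⟩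
    rcases (Nat.lt_succ_iff.mp hj).lt_or_eq with hjn | rfl
    · have hupd : ∀ k ≤ j, Function.update x n v k = x k := fun k hk =>
        Function.update_of_ne (by omega) v x
      refine ⟨hupd j le_rfl ▸ (hx j hjn).1, fun j' hj' => ?_⟩
      rw [hupd j le_rfl, hupd j' hj'.le]
      exact (hx j hjn).2 j' hj'
    · refine ⟨by simpa using hvS, fun j' hj' => ?_⟩
      simpa [Function.update_of_ne hj'.ne] using hv j' hj'

end Greedy

theorem exists_matrix_forall_lt_add_ne_add {G : Type*} [AddCommGroup G] [DecidableEq G]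
    (S : Finset G) (κ m : ℕ) (hS : (m - 1) * (κ - 1) < #S) :
    ∃ P : ℕ → ℕ → G, (∀ i < m, ∀ j < κ, P i j ∈ S) ∧
      ∀ i₁ < m, ∀ i₂ < i₁, ∀ j₁ < κ, ∀ j₂ < j₁, P i₁ j₁ + P i₂ j₂ ≠ P i₁ j₂ + P i₂ j₁ := by
  induction m with
  | zero => exact ⟨0, fun i hi => absurd hi i.not_lt_zero, fun i hi => absurd hi i.not_lt_zero⟩
  | succ m ih =>
    obtain ⟨P, hPS, hP⟩ :=
      ih (lt_of_le_of_lt (Nat.mul_le_mul_right (κ - 1) (Nat.sub_le m 1)) hS)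
    -- the new row must avoid the differences `P i j - P i j'` of the earlier rows
    obtain ⟨x, hx⟩ := exists_seq_forall_sub_notMem S
      (fun j j' => (range m).image fun i => P i j - P i j') m κ
      (fun j j' => card_image_le.trans (card_range m).le) (by rwa [mul_comm])
    refine ⟨Function.update P m x, fun i hi j hj => ?_, fun i₁ hi₁ i₂ hi₂ j₁ hj₁ j₂ hj₂ => ?_⟩
    · rcases (Nat.lt_succ_iff.mp hi).lt_or_eq with him | rfl
      · simpa [Function.update_of_ne him.ne] using hPS i him j hj
      · simpa using (hx j hj).1
    · rw [Function.update_of_ne (hi₂.trans_le (Nat.lt_succ_iff.mp hi₁)).ne]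
      rcases (Nat.lt_succ_iff.mp hi₁).lt_or_eq with him | rfl
      · rw [Function.update_of_ne him.ne]
        exact hP i₁ him i₂ hi₂ j₁ hj₁ j₂ hj₂
      · intro h
        refine (hx j₁ hj₁).2 j₂ hj₂ (mem_image.mpr ⟨i₂, mem_range.mpr hi₂, ?_⟩)
        rw [Function.update_self] at h
        rw [sub_eq_sub_iff_add_eq_add, h, add_comm]

theorem add_ne_add_of_forall_lt {α β G : Type*} [LinearOrder α] [LinearOrder β] [AddCommMagma G]
    {P : α → β → G}
    (h : ∀ i₁ i₂ j₁ j₂, i₂ < i₁ → j₂ < j₁ → P i₁ j₁ + P i₂ j₂ ≠ P i₁ j₂ + P i₂ j₁)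
    {i₁ i₂ : α} {j₁ j₂ : β} (hi : i₁ ≠ i₂) (hj : j₁ ≠ j₂) :
    P i₁ j₁ + P i₂ j₂ ≠ P i₁ j₂ + P i₂ j₁ := by
  rcases hi.lt_or_gt with hi | hi <;> rcases hj.lt_or_gt with hj | hj
  · rw [add_comm, add_comm (P i₁ j₂)]
    exact h i₂ i₁ j₂ j₁ hi hj
  · rw [add_comm, add_comm (P i₁ j₂)]
    exact (h i₂ i₁ j₁ j₂ hi hj).symm
  · exact (h i₁ i₂ j₂ j₁ hi hj).symm
  · exact h i₁ i₂ j₁ j₂ hi hj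

theorem exists_partition_matrix_no_four_cycles_general
    (γ κ : ℕ)
    (S : Finset ℤ) (hS : (γ - 1) * (κ - 1) + 1 ≤ S.card) :
    ∃ P : Fin γ → Fin κ → ℤ, (∀ i j, P i j ∈ S) ∧
      ∀ i1 i2 : Fin γ, ∀ j1 j2 : Fin κ, i1 ≠ i2 → j1 ≠ j2 →
        P i1 j1 + P i2 j2 ≠ P i1 j2 + P i2 j1 := by
  obtain ⟨P, hPS, hP⟩ := exists_matrix_forall_lt_add_ne_add S κ γ hS
  let Q : Fin γ → Fin κ → ℤ := fun i j => P i j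
  refine ⟨Q, fun i j => hPS i i.2 j j.2, fun _ _ _ _ => ?_⟩
  exact add_ne_add_of_forall_lt (P := Q) fun i₁ i₂ j₁ j₂ hi hj => hP i₁ i₁.2 i₂ hi j₁ j₁.2 j₂ hj

/-- Corollary 2: for a fully connected `γ × κ` base graph, any value set
`S ⊆ ℤ` with `|S| ≥ (γ-1)(κ-1) + 1` admits a partition matrix
`P : {0,…,γ-1} × {0,…,κ-1} → S` destroying all 4-cycle candidates, i.e.
`P i1 j1 + P i2 j2 ≠ P i1 j2 + P i2 j1` whenever `i1 ≠ i2` and `j1 ≠ j2`;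
hence the coupled protograph has girth at least 6. -/
theorem exists_partition_matrix_no_four_cycles
    (γ κ : ℕ) (hγ : 2 ≤ γ) (hκ : 2 ≤ κ)
    (S : Finset ℤ) (hS : (γ - 1) * (κ - 1) + 1 ≤ S.card) :
    ∃ P : Fin γ → Fin κ → ℤ, (∀ i j, P i j ∈ S) ∧
      ∀ i1 i2 : Fin γ, ∀ j1 j2 : Fin κ, i1 ≠ i2 → j1 ≠ j2 →
        P i1 j1 + P i2 j2 ≠ P i1 j2 + P i2 j1 :=
  exists_partition_matrix_no_four_cycles_general γ κ S hS
end

section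
/- Let γ ≥ 2 and κ ≥ 2 be integers and let S ⊆ ℤ be a finite set with |S| ≥ (γ−1)(γ−2)(κ−1)(κ−2) + (γ−1)(κ−1) + 1. Then there exists a function P : {0,…,γ−1} × {0,…,κ−1} → S such that (i) for all i1 ≠ i2 and j1 ≠ j2, P(i1,j1) + P(i2,j2) ≠ P(i1,j2) + P(i2,j1), and (ii) for all pairwise distinct i1, i2, i3 in {0,…,γ−1} and pairwise distinct j1, j2, j3 in {0,…,κ−1}, P(i1,j1) + P(i2,j2) + P(i3,j3) ≠ P(i1,j2) + P(i2,j3) + P(i3,j1). -/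
/-! Fill the matrix greedily in row-major order. A 4-cycle or 6-cycle can only be closed by its
last entry `(i, j)`, and the cycle equation then pins `P i j` to a value determined by earlier
entries: at most `i j` values for 4-cycles and `i (i - 1) j (κ - 2)` for 6-cycles (two further
rows, the other column in row `i`, and a third column). The bound on `|S|` exceeds this count at
every position, so a free value always remains. -/

open Finset

theorem exists_forall_mem_sdiff_of_card_lt {α β : Type*} [Preorder α] [WellFoundedLT α]
    [Nonempty β] [DecidableEq β] (S : Finset β) (forb : α → (α → β) → Finset β)
    (hforb : ∀ a f g, (∀ b < a, f b = g b) → forb a f = forb a g)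
    (hcard : ∀ a f, #(forb a f) < #S) :
    ∃ f : α → β, ∀ a, f a ∈ S \ forb a f := by
  classical
  have hfree : ∀ a f, ∃ x, x ∈ S \ forb a f := fun a f =>
    sdiff_nonempty.2 fun hsub => (card_le_card hsub).not_gt (hcard a f)
  choose pick hpick using hfree
  let extend (a : α) (g : ∀ b, b < a → β) (b : α) : β :=
    if h : b < a then g b h else Classical.arbitrary β
  let f : α → β := wellFounded_lt.fix fun a g => pick a (extend a g)
  refine ⟨f, fun a => ?_⟩
  have hfa : f a = pick a (extend a fun b _ => f b) := wellFounded_lt.fix_eq _ a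
  have hextend : forb a (extend a fun b _ => f b) = forb a f :=
    hforb a _ _ fun b hb => dif_pos hb
  rw [hfa, ← hextend]
  exact hpick a _

section CycleCompletions

variable {ι η G : Type*} [LinearOrder ι] [LinearOrder η] [LocallyFiniteOrderBot ι]
  [LocallyFiniteOrderBot η] [AddCommGroup G] [DecidableEq G]

/-- The values of `P i j` closing a 4-cycle or a 6-cycle of `P` whose other entries all come
before `(i, j)` in row-major order. -/
def cycleCompletions [Fintype η] (P : ι → η → G) (i : ι) (j : η) : Finset G :=
  (Iio i ×ˢ Iio j).image (fun x => P i x.2 + P x.1 j - P x.1 x.2) ∪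
    ((Iio i).offDiag ×ˢ (Iio j).sigma fun j' => ({j, j'}ᶜ : Finset η)).image
      fun x => P i x.2.1 - P x.1.1 x.2.1 + P x.1.1 x.2.2 - P x.1.2 x.2.2 + P x.1.2 j

theorem card_cycleCompletions_le [Fintype η] (P : ι → η → G) (i : ι) (j : η) :
    #(cycleCompletions P i j) ≤ #(Iio i) * #(Iio j) +
      (#(Iio i) * #(Iio i) - #(Iio i)) * (#(Iio j) * (Fintype.card η - 2)) := by
  refine (card_union_le _ _).trans (add_le_add (card_image_le.trans_eq (card_product _ _))
    (card_image_le.trans_eq ?_))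
  rw [card_product, offDiag_card, card_sigma, sum_const_nat fun j' hj' => ?_]
  rw [card_compl, card_pair (mem_Iio.1 hj').ne']

theorem cycleCompletions_congr [Fintype η] {P Q : ι → η → G} {i : ι} {j : η}
    (h : ∀ i' j', toLex (i', j') < toLex (i, j) → P i' j' = Q i' j') :
    cycleCompletions P i j = cycleCompletions Q i j := by
  have hrow : ∀ {i'}, i' < i → P i' = Q i' := fun hi =>
    funext fun _ => h _ _ (Prod.Lex.toLex_lt_toLex.2 (Or.inl hi))
  have hcol : ∀ {j'}, j' < j → P i j' = Q i j' := fun hj =>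
    h _ _ (Prod.Lex.toLex_lt_toLex.2 (Or.inr ⟨rfl, hj⟩))
  unfold cycleCompletions
  congr 1
  · refine image_congr fun x hx => ?_
    simp only [coe_product, Set.mem_prod, coe_Iio, Set.mem_Iio] at hx
    simp only [hrow hx.1, hcol hx.2]
  · refine image_congr fun x hx => ?_
    simp only [coe_product, Set.mem_prod, coe_offDiag, Set.mem_offDiag, coe_Iio, Set.mem_Iio,
      coe_sigma, Set.mem_sigma_iff] at hx
    simp only [hrow hx.1.1, hrow hx.1.2.1, hcol hx.2.1]

theorem add_ne_add_of_forall_notMem_cycleCompletions [Fintype η] {P : ι → η → G}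
    (hP : ∀ i j, P i j ∉ cycleCompletions P i j) {i₁ i₂ : ι} {j₁ j₂ : η}
    (hi : i₁ ≠ i₂) (hj : j₁ ≠ j₂) :
    P i₁ j₁ + P i₂ j₂ ≠ P i₁ j₂ + P i₂ j₁ := by
  intro heq
  wlog hi' : i₂ < i₁ generalizing i₁ i₂
  · exact this hi.symm (by linear_combination (norm := abel) -heq)
      (hi.lt_or_gt.resolve_right hi')
  wlog hj' : j₂ < j₁ generalizing j₁ j₂
  · exact this hj.symm heq.symm (hj.lt_or_gt.resolve_right hj')
  refine hP i₁ j₁ (mem_union_left _ (mem_image.2 ⟨(i₂, j₂), by simp [hi', hj'], ?_⟩))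
  linear_combination (norm := abel) -heq

theorem add_add_ne_add_add_of_forall_notMem_cycleCompletions [Fintype η] {P : ι → η → G}
    (hP : ∀ i j, P i j ∉ cycleCompletions P i j) {i₁ i₂ i₃ : ι} {j₁ j₂ j₃ : η}
    (hi₁₂ : i₁ ≠ i₂) (hi₁₃ : i₁ ≠ i₃) (hi₂₃ : i₂ ≠ i₃)
    (hj₁₂ : j₁ ≠ j₂) (hj₁₃ : j₁ ≠ j₃) (hj₂₃ : j₂ ≠ j₃) :
    P i₁ j₁ + P i₂ j₂ + P i₃ j₃ ≠ P i₁ j₂ + P i₂ j₃ + P i₃ j₁ := by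
  intro heq
  -- The cycle equation is invariant under rotating the rows and under reversing the cycle.
  wlog hmax : i₂ < i₁ ∧ i₃ < i₁ generalizing i₁ i₂ i₃ j₁ j₂ j₃
  · rcases hi₂₃.lt_or_gt with h₂₃ | h₃₂
    · have h₁₃ : i₁ < i₃ :=
        hi₁₃.lt_or_gt.resolve_right fun h₃₁ => hmax ⟨h₂₃.trans h₃₁, h₃₁⟩
      exact this hi₁₃.symm hi₂₃.symm hi₁₂ hj₁₃.symm hj₂₃.symm hj₁₂
        (by linear_combination (norm := abel) heq) ⟨h₁₃, h₂₃⟩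
    · have h₁₂ : i₁ < i₂ :=
        hi₁₂.lt_or_gt.resolve_right fun h₂₁ => hmax ⟨h₂₁, h₃₂.trans h₂₁⟩
      exact this hi₂₃ hi₁₂.symm hi₁₃.symm hj₂₃ hj₁₂.symm hj₁₃.symm
        (by linear_combination (norm := abel) heq) ⟨h₃₂, h₁₂⟩
  wlog hj : j₂ < j₁ generalizing i₂ i₃ j₁ j₂ j₃
  · exact this hi₁₃ hi₁₂ hi₂₃.symm hj₁₂.symm hj₂₃ hj₁₃
      (by linear_combination (norm := abel) -heq) ⟨hmax.2, hmax.1⟩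
      (hj₁₂.lt_or_gt.resolve_right hj)
  refine hP i₁ j₁ (mem_union_right _ (mem_image.2 ⟨((i₂, i₃), ⟨j₂, j₃⟩), ?_, ?_⟩))
  · simp [hmax, hi₂₃, hj, hj₁₃.symm, hj₂₃.symm]
  · linear_combination (norm := abel) -heq

end CycleCompletions

theorem cycle_count_le_of_lt {γ κ i j : ℕ} (hi : i < γ) (hj : j < κ) :
    i * j + (i * i - i) * (j * (κ - 2)) ≤
      (γ - 1) * (γ - 2) * (κ - 1) * (κ - 2) + (γ - 1) * (κ - 1) := by
  calc i * j + (i * i - i) * (j * (κ - 2))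
      = i * (i - 1) * (j * (κ - 2)) + i * j := by rw [Nat.mul_sub_one, add_comm]
    _ ≤ (γ - 1) * (γ - 2) * ((κ - 1) * (κ - 2)) + (γ - 1) * (κ - 1) := by
      gcongr ?_ * ?_ * (?_ * _) + ?_ * ?_ <;> omega
    _ = _ := by ring

theorem exists_partition_matrix_no_four_or_six_cycles_general
    (γ κ : ℕ)
    (S : Finset ℤ)
    (hS : (γ - 1) * (γ - 2) * (κ - 1) * (κ - 2) + (γ - 1) * (κ - 1) + 1
        ≤ S.card) :
    ∃ P : Fin γ → Fin κ → ℤ, (∀ i j, P i j ∈ S) ∧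
      (∀ i1 i2 : Fin γ, ∀ j1 j2 : Fin κ, i1 ≠ i2 → j1 ≠ j2 →
        P i1 j1 + P i2 j2 ≠ P i1 j2 + P i2 j1) ∧
      (∀ i1 i2 i3 : Fin γ, ∀ j1 j2 j3 : Fin κ,
        i1 ≠ i2 → i1 ≠ i3 → i2 ≠ i3 → j1 ≠ j2 → j1 ≠ j3 → j2 ≠ j3 →
        P i1 j1 + P i2 j2 + P i3 j3 ≠ P i1 j2 + P i2 j3 + P i3 j1) := by
  let forb (p : Fin γ ×ₗ Fin κ) (f : Fin γ ×ₗ Fin κ → ℤ) : Finset ℤ :=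
    cycleCompletions (fun i j => f (toLex (i, j))) (ofLex p).1 (ofLex p).2
  have hcard : ∀ p f, #(forb p f) < #S := fun p f => by
    have := card_cycleCompletions_le (fun i j => f (toLex (i, j))) (ofLex p).1 (ofLex p).2
    simp only [Fin.card_Iio, Fintype.card_fin] at this
    exact (this.trans (cycle_count_le_of_lt (ofLex p).1.isLt (ofLex p).2.isLt)).trans_lt hS
  obtain ⟨f, hf⟩ := exists_forall_mem_sdiff_of_card_lt S forb
    (fun _ _ _ h => cycleCompletions_congr fun _ _ hlt => h _ hlt) hcard
  set P : Fin γ → Fin κ → ℤ := fun i j => f (toLex (i, j))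
  have hP : ∀ i j, P i j ∈ S ∧ P i j ∉ cycleCompletions P i j :=
    fun i j => mem_sdiff.1 (hf (toLex (i, j)))
  exact ⟨P, fun i j => (hP i j).1,
    fun _ _ _ _ => add_ne_add_of_forall_notMem_cycleCompletions fun i j => (hP i j).2,
    fun _ _ _ _ _ _ => add_add_ne_add_add_of_forall_notMem_cycleCompletions fun i j => (hP i j).2⟩

/-- Corollary 3: for a fully connected `γ × κ` base graph, any value set
`S ⊆ ℤ` with `|S| ≥ (γ-1)(γ-2)(κ-1)(κ-2) + (γ-1)(κ-1) + 1` admits a partition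
matrix `P` destroying simultaneously all 4-cycle candidates and all 6-cycle
candidates; hence the coupled protograph has girth at least 8. -/
theorem exists_partition_matrix_no_four_or_six_cycles
    (γ κ : ℕ) (hγ : 2 ≤ γ) (hκ : 2 ≤ κ)
    (S : Finset ℤ)
    (hS : (γ - 1) * (γ - 2) * (κ - 1) * (κ - 2) + (γ - 1) * (κ - 1) + 1
        ≤ S.card) :
    ∃ P : Fin γ → Fin κ → ℤ, (∀ i j, P i j ∈ S) ∧
      (∀ i1 i2 : Fin γ, ∀ j1 j2 : Fin κ, i1 ≠ i2 → j1 ≠ j2 →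
        P i1 j1 + P i2 j2 ≠ P i1 j2 + P i2 j1) ∧
      (∀ i1 i2 i3 : Fin γ, ∀ j1 j2 j3 : Fin κ,
        i1 ≠ i2 → i1 ≠ i3 → i2 ≠ i3 → j1 ≠ j2 → j1 ≠ j3 → j2 ≠ j3 →
        P i1 j1 + P i2 j2 + P i3 j3 ≠ P i1 j2 + P i2 j3 + P i3 j1) :=
  exists_partition_matrix_no_four_or_six_cycles_general γ κ S hS
end

section
/- Let n ≥ 1, s ≥ 2, and D be integers with 0 ≤ D ≤ n(s−1), and write D = q(s−1) + r with q ≥ 0 an integer and 0 ≤ r < s−1. Then the minimum of the product y_1 · y_2 ⋯ y_n over all integer tuples (y_1,…,y_n) with 1 ≤ y_i ≤ s for all i and y_1 + ⋯ + y_n = ns − D equals s^{n−q} if r = 0, and equals (s−r)·s^{n−q−1} if r > 0; in particular this set of tuples is nonempty and the minimum is attained. -/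
/-!
Measure each tuple by its deficits `s - y i ∈ [0, s - 1]`, which add up to `D`. The minimum is
attained by the greedy tuple, in which each coordinate in turn absorbs as much of the remaining
deficit as it can: `q` coordinates equal to `1`, one equal to `s - r`, the rest equal to `s`.
Optimality follows by induction on `n` from one inequality: prepending a coordinate of deficit `d`
to the greedy tuple of deficit `D` gives a product at least that of the greedy tuple of deficit
`D + d`. Peeling off coordinates equal to `1` reduces this to `D < s - 1`, where only two
coordinates `a, b ∈ [1, s]` are below `s` and it is the exchange argument
`(a - 1) (b - 1) ≥ 0`, `(s - a) (s - b) ≥ 0`.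
-/

namespace AlonFuredi

def greedyProd (s : ℕ) : ℕ → ℕ → ℕ
  | 0, _ => 1
  | n + 1, D => (s - min D (s - 1)) * greedyProd s n (D - min D (s - 1))

variable {s : ℕ}

theorem mul_pred_add_self (hs : 0 < s) (n : ℕ) : n * (s - 1) + n = n * s := by
  rw [← Nat.mul_succ, Nat.succ_eq_add_one, Nat.sub_add_cancel hs]

theorem greedyProd_succ (n D : ℕ) :
    greedyProd s (n + 1) D = (s - min D (s - 1)) * greedyProd s n (D - min D (s - 1)) :=
  rfl

theorem greedyProd_zero_right (n : ℕ) : greedyProd s n 0 = s ^ n := by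
  induction n with
  | zero => rfl
  | succ n ih => simp [greedyProd_succ, ih, pow_succ, mul_comm]

theorem greedyProd_succ_of_le (n : ℕ) {D : ℕ} (hD : D ≤ s - 1) :
    greedyProd s (n + 1) D = (s - D) * s ^ n := by
  rw [greedyProd_succ, min_eq_left hD, Nat.sub_self, greedyProd_zero_right]

theorem greedyProd_succ_of_ge (hs : 0 < s) (n : ℕ) {D : ℕ} (hD : s - 1 ≤ D) :
    greedyProd s (n + 1) D = greedyProd s n (D - (s - 1)) := by
  rw [greedyProd_succ, min_eq_right hD, Nat.sub_sub_self hs, Nat.one_mul]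

theorem greedyProd_add_mul (hs : 0 < s) (n q D : ℕ) :
    greedyProd s (n + q) (q * (s - 1) + D) = greedyProd s n D := by
  induction q with
  | zero => simp
  | succ q ih =>
    rw [← add_assoc, add_mul, one_mul, greedyProd_succ_of_ge hs _ (by omega), ← ih]
    congr 1
    omega

theorem greedyProd_succ_add_le (hs : 0 < s) {n D d : ℕ} (hD : D ≤ n * (s - 1))
    (hd : d ≤ s - 1) : greedyProd s (n + 1) (D + d) ≤ (s - d) * greedyProd s n D := by
  induction n generalizing D with
  | zero =>
    obtain rfl : D = 0 := by simpa using hD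
    simp [greedyProd, min_eq_left hd]
  | succ n ih =>
    by_cases hDs : s - 1 ≤ D
    · rw [greedyProd_succ_of_ge hs _ (by omega), greedyProd_succ_of_ge hs _ hDs,
        show D + d - (s - 1) = D - (s - 1) + d by omega]
      exact ih (by rw [add_mul, one_mul] at hD; omega)
    · rw [greedyProd_succ_of_le _ (by omega : D ≤ s - 1), ← mul_assoc]
      by_cases hDd : D + d ≤ s - 1
      · rw [greedyProd_succ_of_le _ hDd, pow_succ, mul_comm (s ^ n) s, ← mul_assoc]
        -- `(s - D) (s - d) - s (s - D - d) = D d`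
        have key : (s - (D + d)) * s ≤ (s - d) * (s - D) := by
          zify [(by omega : D + d ≤ s), (by omega : d ≤ s), (by omega : D ≤ s)]
          nlinarith
        exact Nat.mul_le_mul_right _ key
      · rw [greedyProd_succ_of_ge hs _ (by omega), greedyProd_succ_of_le _ (by omega)]
        have key : s - (D + d - (s - 1)) ≤ (s - d) * (s - D) := by
          zify [(by omega : s - 1 ≤ D + d), (by omega : D + d - (s - 1) ≤ s),
            (by omega : d ≤ s), (by omega : D ≤ s), (by omega : 1 ≤ s)]
          have hd1 : (0 : ℤ) ≤ s - d - 1 := by omega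
          have hD1 : (0 : ℤ) ≤ s - D - 1 := by omega
          nlinarith [mul_nonneg hd1 hD1]
        exact Nat.mul_le_mul_right _ key

theorem greedyProd_le_prod {n : ℕ} (y : Fin n → ℕ) (hy : ∀ i, 1 ≤ y i ∧ y i ≤ s) :
    greedyProd s n (n * s - ∑ i, y i) ≤ ∏ i, y i := by
  induction n with
  | zero => simp [greedyProd]
  | succ n ih =>
    have hs : 0 < s := (hy 0).1.trans (hy 0).2
    have htail : ∀ i : Fin n, 1 ≤ y i.succ ∧ y i.succ ≤ s := fun i ↦ hy i.succ
    have hlow : n ≤ ∑ i : Fin n, y i.succ := by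
      simpa using Finset.card_nsmul_le_sum Finset.univ _ 1 fun i _ ↦ (htail i).1
    have hhigh : ∑ i : Fin n, y i.succ ≤ n * s := by
      simpa using Finset.sum_le_card_nsmul Finset.univ _ s fun i _ ↦ (htail i).2
    have hdeficit : (n + 1) * s - (y 0 + ∑ i : Fin n, y i.succ) =
        (n * s - ∑ i : Fin n, y i.succ) + (s - y 0) := by
      have := (hy 0).2
      rw [add_mul, one_mul]
      omega
    rw [Fin.sum_univ_succ, Fin.prod_univ_succ, hdeficit]
    calc greedyProd s (n + 1) ((n * s - ∑ i : Fin n, y i.succ) + (s - y 0))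
        ≤ (s - (s - y 0)) * greedyProd s n (n * s - ∑ i : Fin n, y i.succ) := by
          have := (hy 0).1
          have := mul_pred_add_self hs n
          exact greedyProd_succ_add_le hs (by omega) (by omega)
      _ ≤ y 0 * ∏ i : Fin n, y i.succ := by
          rw [Nat.sub_sub_self (hy 0).2]
          exact Nat.mul_le_mul_left _ (ih _ htail)

theorem exists_prod_eq_greedyProd (hs : 0 < s) {n D : ℕ} (hD : D ≤ n * (s - 1)) :
    ∃ y : Fin n → ℕ, (∀ i, 1 ≤ y i ∧ y i ≤ s) ∧ ∑ i, y i = n * s - D ∧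
      ∏ i, y i = greedyProd s n D := by
  induction n generalizing D with
  | zero => exact ⟨Fin.elim0, fun i ↦ i.elim0, by simp_all, rfl⟩
  | succ n ih =>
    have := mul_pred_add_self hs n
    obtain ⟨y, hy, hsum, hprod⟩ := ih (D := D - min D (s - 1)) (by rw [add_mul] at hD; omega)
    refine ⟨Fin.cons (s - min D (s - 1)) y, Fin.cases ⟨by simp; omega, by simp⟩ hy, ?_, ?_⟩
    · rw [Fin.sum_cons, hsum, add_mul, one_mul]
      rw [add_mul, one_mul] at hD
      omega
    · rw [Fin.prod_cons, hprod, greedyProd_succ]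

theorem greedyProd_eq {n q r : ℕ} (hr : r < s - 1) (h : q * (s - 1) + r ≤ n * (s - 1)) :
    greedyProd s n (q * (s - 1) + r) =
      if r = 0 then s ^ (n - q) else (s - r) * s ^ (n - q - 1) := by
  have hq : q ≤ n := Nat.le_of_mul_le_mul_right (c := s - 1) (by omega) (by omega)
  obtain ⟨m, rfl⟩ : ∃ m, n = m + q := ⟨n - q, (Nat.sub_add_cancel hq).symm⟩
  rw [greedyProd_add_mul (by omega), Nat.add_sub_cancel]
  split_ifs with hr0
  · rw [hr0, greedyProd_zero_right]
  · obtain ⟨k, rfl⟩ : ∃ k, m = k + 1 :=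
      Nat.exists_eq_add_one.mpr (Nat.pos_of_ne_zero fun hm ↦ by simp [hm] at h; omega)
    exact greedyProd_succ_of_le k hr.le

end AlonFuredi

theorem alon_furedi_uniform_grid_min_general
    (n s D q r : ℕ)
    (hD : D ≤ n * (s - 1)) (hqr : D = q * (s - 1) + r) (hr : r < s - 1) :
    IsLeast
      {p : ℕ | ∃ y : Fin n → ℕ, (∀ i, 1 ≤ y i ∧ y i ≤ s) ∧
        (∑ i, y i) = n * s - D ∧ p = ∏ i, y i}
      (if r = 0 then s ^ (n - q) else (s - r) * s ^ (n - q - 1)) := by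
  rw [← AlonFuredi.greedyProd_eq hr (hqr ▸ hD), ← hqr]
  refine ⟨?_, ?_⟩
  · obtain ⟨y, hy, hsum, hprod⟩ := AlonFuredi.exists_prod_eq_greedyProd (by omega) hD
    exact ⟨y, hy, hsum, hprod.symm⟩
  · rintro p ⟨y, hy, hsum, rfl⟩
    have hDs : D ≤ n * s := hD.trans (Nat.mul_le_mul_left n (Nat.sub_le s 1))
    simpa [hsum, Nat.sub_sub_self hDs] using AlonFuredi.greedyProd_le_prod y hy

/-- Lemma 4: explicit evaluation of the Alon–Füredi quantity on the uniform
grid.  For `n ≥ 1`, `s ≥ 2`, `0 ≤ D ≤ n(s-1)` with `D = q(s-1) + r`,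
`0 ≤ r < s-1`, the minimum of `∏ y i` over integer tuples with `1 ≤ y i ≤ s`
and `∑ y i = n s - D` equals `s^(n-q)` if `r = 0` and `(s-r) s^(n-q-1)`
otherwise; in particular the minimum is attained. -/
theorem alon_furedi_uniform_grid_min
    (n s D q r : ℕ) (hn : 1 ≤ n) (hs : 2 ≤ s)
    (hD : D ≤ n * (s - 1)) (hqr : D = q * (s - 1) + r) (hr : r < s - 1) :
    IsLeast
      {p : ℕ | ∃ y : Fin n → ℕ, (∀ i, 1 ≤ y i ∧ y i ≤ s) ∧
        (∑ i, y i) = n * s - D ∧ p = ∏ i, y i}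
      (if r = 0 then s ^ (n - q) else (s - r) * s ^ (n - q - 1)) :=
  alon_furedi_uniform_grid_min_general n s D q r hD hqr hr
end

section
/- Let F be a field, let n ≥ 1, and for each i ∈ {1,…,n} let A_i ⊆ F be a finite nonempty set; set A = A_1 × ⋯ × A_n. Let f ∈ F[x_1,…,x_n] be a polynomial that does not vanish at every point of A, and suppose its total degree satisfies deg f ≤ ∑_{i=1}^n (|A_i| − 1). Then the number of points x ∈ A with f(x) ≠ 0 is at least the minimum of ∏_{i=1}^n y_i over all integer tuples (y_1,…,y_n) with 1 ≤ y_i ≤ |A_i| for every i and ∑_{i=1}^n y_i = ∑_{i=1}^n |A_i| − deg f. -/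
/-!
Dividing `f` by the polynomials `∏ a ∈ A i, (X i - C a)` (as in the Combinatorial
Nullstellensatz) changes neither its values on the grid nor raises its total degree, and makes
it reduced: `degreeOf i f < #(A i)` for every `i`. For a reduced `f ≠ 0` we induct on `n`.
Viewing `f` as a polynomial of degree `d < #(A 0)` in `X 0` with leading coefficient `g`, every
point `x'` of the smaller grid with `g x' ≠ 0` specializes `f` to a univariate polynomial of
degree `d`, nonzero at `#(A 0) - d` points of `A 0` at least. Since `g` is again reduced and
`deg g + d ≤ deg f`, this yields an admissible tuple `y` with `∑ y ≥ ∑ #(A i) - deg f` and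
`∏ y` at most the number of nonzeros of `f`; lowering coordinates of `y` until the sum is
exact only decreases the product.
-/

open Finset MvPolynomial MonomialOrder

theorem Fin.exists_pos_le_sum_eq {n N : ℕ} (y : Fin n → ℕ) (hy : ∀ i, 1 ≤ y i) (hN : n ≤ N)
    (hNy : N ≤ ∑ i, y i) : ∃ z : Fin n → ℕ, (∀ i, 1 ≤ z i ∧ z i ≤ y i) ∧ ∑ i, z i = N := by
  induction n generalizing N with
  | zero => exact ⟨y, fun i => i.elim0, by simp_all⟩
  | succ n ih =>
    have htail : n ≤ ∑ i : Fin n, y i.succ := by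
      simpa using sum_le_sum (s := univ) fun (i : Fin n) _ => hy i.succ
    rw [Fin.sum_univ_succ] at hNy
    set z₀ := min (y 0) (N - n)
    obtain ⟨z, hz, hzN⟩ := ih (Fin.tail y) (fun i => hy i.succ) (N := N - z₀) (by omega)
      (by simp only [Fin.tail]; omega)
    refine ⟨Fin.cons z₀ z, Fin.forall_fin_succ.2 ⟨?_, fun i => by simpa [Fin.tail] using hz i⟩, ?_⟩
    · have := hy 0
      simp only [Fin.cons_zero]
      omega
    · rw [Fin.sum_cons, hzN]
      omega

theorem Finset.card_filter_piFinset_succ {α : Type*} {n : ℕ} (A : Fin (n + 1) → Finset α)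
    (P : (Fin (n + 1) → α) → Prop) [DecidablePred P] :
    #{x ∈ Fintype.piFinset A | P x} =
      ∑ x ∈ Fintype.piFinset (Fin.tail A), #{b ∈ A 0 | P (Fin.cons b x)} := by
  have hsplit : {x ∈ Fintype.piFinset A | P x}.map (Fin.consEquiv fun _ => α).symm.toEmbedding =
      {p ∈ A 0 ×ˢ Fintype.piFinset (Fin.tail A) | P (Fin.cons p.1 p.2)} := by
    ext ⟨b, x⟩
    simp [Fin.consEquiv, Fin.forall_fin_succ, Fin.tail, and_assoc]
  rw [← card_map, hsplit, card_filter, sum_product_right]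
  simp_rw [card_filter]

section Domain

variable {R : Type*} [CommRing R] [IsDomain R] [DecidableEq R]

theorem Polynomial.card_sub_natDegree_le_card_filter_eval_ne_zero {p : Polynomial R}
    (hp : p ≠ 0) (s : Finset R) : #s - p.natDegree ≤ #{x ∈ s | p.eval x ≠ 0} := by
  have hroots : #{x ∈ s | p.eval x = 0} ≤ p.natDegree :=
    card_le_degree_of_subset_roots fun x hx => by simp_all [mem_roots hp]
  have := card_filter_add_card_filter_not (s := s) (fun x => p.eval x = 0)
  simp only [ne_eq]
  omega

theorem MvPolynomial.card_sub_natDegree_le_card_filter_eval_cons_ne_zero {n : ℕ}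
    {f : MvPolynomial (Fin (n + 1)) R} {x : Fin n → R}
    (hx : eval x (finSuccEquiv R n f).leadingCoeff ≠ 0) (s : Finset R) :
    #s - (finSuccEquiv R n f).natDegree ≤ #{b ∈ s | eval (Fin.cons b x) f ≠ 0} := by
  set q := (finSuccEquiv R n f).map (eval x)
  have hq : q ≠ 0 := fun h => hx (by
    simpa [q, Polynomial.coeff_map] using congrArg (·.coeff (finSuccEquiv R n f).natDegree) h)
  have hqdeg : q.natDegree ≤ (finSuccEquiv R n f).natDegree := Polynomial.natDegree_map_le
  simp_rw [eval_eq_eval_mv_eval']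
  exact (Nat.sub_le_sub_left hqdeg _).trans (q.card_sub_natDegree_le_card_filter_eval_ne_zero hq s)

end Domain

theorem MvPolynomial.degLex_degree_prod_X_sub_C {R σ : Type*} [CommRing R] [Nontrivial R]
    [LinearOrder σ] [WellFoundedGT σ] (S : Finset R) (i : σ) :
    degLex.degree (∏ s ∈ S, (X i - C s) : MvPolynomial σ R) = Finsupp.single i #S := by
  rw [degree_prod_of_regular fun s _ => by rw [degLex.monic_X_sub_C i s]; exact isRegular_one]
  simp [degLex.degree_X_sub_C]

theorem MvPolynomial.exists_degreeOf_lt_eval_eq {R σ : Type*} [CommRing R] [Nontrivial R]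
    [Finite σ] (S : σ → Finset R) (hS : ∀ i, (S i).Nonempty) (f : MvPolynomial σ R) :
    ∃ r : MvPolynomial σ R, (∀ i, degreeOf i r < #(S i)) ∧ r.totalDegree ≤ f.totalDegree ∧
      ∀ x : σ → R, (∀ i, x i ∈ S i) → eval x r = eval x f := by
  let : LinearOrder σ := WellOrderingRel.isWellOrder.linearOrder
  set b : σ → MvPolynomial σ R := fun i ↦ ∏ s ∈ S i, (X i - C s)
  obtain ⟨h, r, hf, hh, hr⟩ := degLex.div (b := b) (fun i ↦ by
    simp [b, (Monic.prod fun s _ => degLex.monic_X_sub_C i s).leadingCoeff_eq_one]) f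
  rw [Finsupp.linearCombination_apply, Finsupp.sum] at hf
  have hr_eq : r = f - ∑ i ∈ h.support, h i * b i := by rw [hf]; simp
  refine ⟨r, fun i => ?_, ?_, fun x hx => ?_⟩
  · refine (degreeOf_lt_iff (card_pos.2 (hS i))).2 fun c hc => not_le.1 fun hic => hr c hc i ?_
    rwa [degLex_degree_prod_X_sub_C, Finsupp.single_le_iff]
  · rw [hr_eq]
    refine (totalDegree_sub _ _).trans (max_le le_rfl ((totalDegree_finsetSum _ _).trans ?_))
    exact Finset.sup_le fun i _ => mul_comm (b i) (h i) ▸ degLex_totalDegree_monotone (hh i)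
  · have hb : ∀ i, eval x (b i) = 0 := fun i => by
      simpa [b, eval_prod] using prod_eq_zero (hx i) (sub_self (x i))
    simp [hr_eq, hb]

namespace AlonFuredi

/-- The paper's `𝔪(a; N)`. It is `sInf ∅ = 0` when no tuple is admissible, e.g. when `N < n`. -/
noncomputable def minProd {n : ℕ} (a : Fin n → ℕ) (N : ℕ) : ℕ :=
  sInf {p : ℕ | ∃ y : Fin n → ℕ, (∀ i, 1 ≤ y i ∧ y i ≤ a i) ∧ (∑ i, y i) = N ∧ p = ∏ i, y i}

theorem minProd_le_prod {n N : ℕ} {a y : Fin n → ℕ} (hy : ∀ i, 1 ≤ y i ∧ y i ≤ a i)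
    (hN : N ≤ ∑ i, y i) : minProd a N ≤ ∏ i, y i := by
  by_cases hn : n ≤ N
  · obtain ⟨z, hz, hzN⟩ := Fin.exists_pos_le_sum_eq y (fun i => (hy i).1) hn hN
    have hmin : minProd a N ≤ ∏ i, z i :=
      Nat.sInf_le ⟨z, fun i => ⟨(hz i).1, (hz i).2.trans (hy i).2⟩, hzN, rfl⟩
    exact hmin.trans (prod_le_prod' fun i _ => (hz i).2)
  · refine (Nat.sInf_eq_zero.2 (Or.inr ?_)).trans_le (Nat.zero_le _)
    refine Set.eq_empty_of_forall_notMem fun p hp => hn ?_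
    obtain ⟨z, hz, hzN, -⟩ := hp
    simpa [hzN] using sum_le_sum (s := univ) fun i _ => (hz i).1

theorem exists_prod_le_card_eval_ne_zero {R : Type*} [CommRing R] [IsDomain R] [DecidableEq R]
    {n : ℕ} (A : Fin n → Finset R) (f : MvPolynomial (Fin n) R) (hf : f ≠ 0)
    (hred : ∀ i, degreeOf i f < #(A i)) :
    ∃ y : Fin n → ℕ, (∀ i, 1 ≤ y i ∧ y i ≤ #(A i)) ∧ ∑ i, #(A i) ≤ ∑ i, y i + f.totalDegree ∧
      ∏ i, y i ≤ #{x ∈ Fintype.piFinset A | eval x f ≠ 0} := by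
  induction n with
  | zero =>
    refine ⟨Fin.elim0, fun i => i.elim0, by simp, ?_⟩
    obtain ⟨c, rfl⟩ : ∃ c, f = C c := ⟨_, eq_C_of_isEmpty f⟩
    exact card_pos.2 ⟨default, by simp [C_ne_zero.1 hf]⟩
  | succ n ih =>
    set g := (finSuccEquiv R n f).leadingCoeff
    set d := (finSuccEquiv R n f).natDegree
    have hd : d < #(A 0) := (natDegree_finSuccEquiv f).trans_lt (hred 0)
    have hg : g ≠ 0 := by simpa [g] using hf
    have hgd : g.totalDegree + d ≤ f.totalDegree := totalDegree_coeff_finSuccEquiv_add_le f _ hg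
    obtain ⟨y, hy, hysum, hyprod⟩ := ih (Fin.tail A) g hg fun j =>
      (degreeOf_coeff_finSuccEquiv f j _).trans_lt (hred j.succ)
    have hcount : (#(A 0) - d) * #{x ∈ Fintype.piFinset (Fin.tail A) | eval x g ≠ 0} ≤
        #{x ∈ Fintype.piFinset A | eval x f ≠ 0} := by
      rw [card_filter_piFinset_succ, mul_comm, ← smul_eq_mul, ← sum_const, sum_filter]
      refine sum_le_sum fun x _ => ?_
      split_ifs with hx
      · exact card_sub_natDegree_le_card_filter_eval_cons_ne_zero hx _
      · exact Nat.zero_le _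
    refine ⟨Fin.cons (#(A 0) - d) y, Fin.forall_fin_succ.2 ⟨by simp; omega, ?_⟩, ?_, ?_⟩
    · simpa [Fin.tail] using hy
    · simp only [Fin.tail] at hysum
      rw [Fin.sum_univ_succ, Fin.sum_cons]
      omega
    · rw [Fin.prod_cons]
      exact (Nat.mul_le_mul_left _ hyprod).trans hcount

end AlonFuredi

theorem alon_furedi_general
    {F : Type*} [Field F] (n : ℕ)
    (A : Fin n → Finset F)
    (f : MvPolynomial (Fin n) F)
    (hnv : ∃ x : Fin n → F, (∀ i, x i ∈ A i) ∧ MvPolynomial.eval x f ≠ 0) :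
    sInf {p : ℕ | ∃ y : Fin n → ℕ, (∀ i, 1 ≤ y i ∧ y i ≤ (A i).card) ∧
        (∑ i, y i) = (∑ i, (A i).card) - f.totalDegree ∧ p = ∏ i, y i}
      ≤ {x : Fin n → F | (∀ i, x i ∈ A i) ∧
          MvPolynomial.eval x f ≠ 0}.ncard := by
  classical
  obtain ⟨x₀, hx₀A, hx₀⟩ := hnv
  obtain ⟨r, hred, hdeg, heval⟩ := exists_degreeOf_lt_eval_eq A (fun i => ⟨x₀ i, hx₀A i⟩) f
  have hr : r ≠ 0 := fun h => hx₀ (by rw [← heval x₀ hx₀A, h, map_zero])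
  obtain ⟨y, hy, hysum, hyprod⟩ := AlonFuredi.exists_prod_le_card_eval_ne_zero A r hr hred
  have hnonzero : {x : Fin n → F | (∀ i, x i ∈ A i) ∧ eval x f ≠ 0} =
      {x ∈ Fintype.piFinset A | eval x r ≠ 0} := by
    ext x
    simp +contextual [heval]
  calc AlonFuredi.minProd (fun i => #(A i)) (∑ i, #(A i) - f.totalDegree)
      ≤ ∏ i, y i := AlonFuredi.minProd_le_prod hy (by omega)
    _ ≤ _ := by rwa [hnonzero, Set.ncard_coe_finset]

/-- **Alon–Füredi theorem** (Lemma 3).  Let `A = A 1 × ⋯ × A n` be a finite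
grid over a field `F` and let `f` be a polynomial not vanishing at every point
of `A`, with total degree `deg f ≤ ∑ (|A i| - 1)`.  Then the number of points
of `A` at which `f` is nonzero is at least
`𝔪(|A 1|, …, |A n|; ∑ |A i| - deg f)`, the minimum of `∏ y i` over integer
tuples with `1 ≤ y i ≤ |A i|` and `∑ y i = ∑ |A i| - deg f`. -/
theorem alon_furedi
    {F : Type*} [Field F] (n : ℕ) (hn : 1 ≤ n)
    (A : Fin n → Finset F) (hA : ∀ i, (A i).Nonempty)
    (f : MvPolynomial (Fin n) F)
    (hnv : ∃ x : Fin n → F, (∀ i, x i ∈ A i) ∧ MvPolynomial.eval x f ≠ 0)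
    (hdeg : f.totalDegree ≤ ∑ i, ((A i).card - 1)) :
    sInf {p : ℕ | ∃ y : Fin n → ℕ, (∀ i, 1 ≤ y i ∧ y i ≤ (A i).card) ∧
        (∑ i, y i) = (∑ i, (A i).card) - f.totalDegree ∧ p = ∏ i, y i}
      ≤ {x : Fin n → F | (∀ i, x i ∈ A i) ∧
          MvPolynomial.eval x f ≠ 0}.ncard :=
  alon_furedi_general n A f hnv
end

section
/- Let F be a field, let n ≥ 1 and m_t ≥ 1 be integers, let S ⊆ F be a finite set with |S| = m_t + 1, and let f ∈ F[x_1,…,x_n] be a nonzero polynomial whose degree in every variable x_i is at most m_t. Then the number of points x ∈ S^n with f(x) ≠ 0 is at least the minimum of ∏_{i=1}^n y_i over all integer tuples (y_1,…,y_n) with 1 ≤ y_i ≤ m_t + 1 for all i and ∑_{i=1}^n y_i = n(m_t + 1) − deg f, where deg f denotes the total degree of f. -/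
/-! Induction on the number of variables. Viewing `f` as a polynomial in `x₀` of degree
`d = deg_{x₀} f` whose leading coefficient `lc` lives in the remaining variables, `f` restricts to a
nonzero univariate polynomial of degree `d` over every point of the smaller grid where `lc` does not
vanish, so it is nonzero at `|S₀| - d` or more points of each such fibre. As `deg lc + d ≤ deg f`,
the induction hypothesis for `lc` supplies the remaining coordinates of the tuple `y`. For the
induction to close, the bound is proved for every sum `n ≤ N ≤ ∑ |Sᵢ| - deg f`, not only the
largest one. -/

open Finset Fintype

namespace Polynomial

variable {R : Type*} [CommRing R] [IsDomain R] [DecidableEq R]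

theorem card_sub_natDegree_le_card_filter_eval_ne_zero_s8 {p : R[X]} (hp : p ≠ 0) (s : Finset R) :
    #s - p.natDegree ≤ #{b ∈ s | p.eval b ≠ 0} := by
  have hroots : #{b ∈ s | p.eval b = 0} ≤ p.natDegree :=
    card_le_degree_of_subset_roots fun b hb => by
      simp only [Finset.filter_val, Multiset.mem_filter] at hb
      exact (mem_roots hp).2 hb.2
  have := card_filter_add_card_filter_not (s := s) (fun b => p.eval b = 0)
  simp only [ne_eq]
  omega

end Polynomial

namespace MvPolynomial

theorem totalDegree_le_sum_degreeOf {R σ : Type*} [CommSemiring R] [Fintype σ]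
    (f : MvPolynomial σ R) : f.totalDegree ≤ ∑ i, f.degreeOf i :=
  Finset.sup_le fun m hm => by
    rw [Finsupp.sum_fintype _ _ fun _ => rfl]
    exact Finset.sum_le_sum fun i _ => monomial_le_degreeOf i hm

noncomputable def nonvanishingPoints {R : Type*} [CommSemiring R] [DecidableEq R] {n : ℕ}
    (S : Fin n → Finset R) (f : MvPolynomial (Fin n) R) : Finset (Fin n → R) :=
  {x ∈ piFinset S | eval x f ≠ 0}

variable {R : Type*} [CommRing R] [IsDomain R] [DecidableEq R]

theorem card_nonvanishingPoints_leadingCoeff_mul_le {n : ℕ} (S : Fin (n + 1) → Finset R)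
    (f : MvPolynomial (Fin (n + 1)) R) :
    #(nonvanishingPoints (Fin.tail S) (finSuccEquiv R n f).leadingCoeff) *
        (#(S 0) - f.degreeOf 0) ≤ #(nonvanishingPoints S f) := by
  set T := nonvanishingPoints (Fin.tail S) (finSuccEquiv R n f).leadingCoeff
  have hfibre : ∀ a ∈ T, #(S 0) - f.degreeOf 0 ≤ #{b ∈ S 0 | eval (Fin.cons b a) f ≠ 0} := by
    intro a ha
    set g := (finSuccEquiv R n f).map (eval a)
    have hlead : g.coeff (finSuccEquiv R n f).natDegree ≠ 0 := by
      rw [Polynomial.coeff_map]; exact (mem_filter.1 ha).2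
    have hg : g ≠ 0 := by rintro hg; simp [hg] at hlead
    have hgdeg : g.natDegree ≤ f.degreeOf 0 :=
      (Polynomial.natDegree_map_le).trans (natDegree_finSuccEquiv f).le
    simp only [eval_eq_eval_mv_eval']
    exact (Nat.sub_le_sub_left hgdeg _).trans
      (Polynomial.card_sub_natDegree_le_card_filter_eval_ne_zero_s8 hg _)
  calc #T * (#(S 0) - f.degreeOf 0) = ∑ _a ∈ T, (#(S 0) - f.degreeOf 0) := by
        rw [sum_const, smul_eq_mul]
    _ ≤ ∑ a ∈ T, #{b ∈ S 0 | eval (Fin.cons b a) f ≠ 0} := sum_le_sum hfibre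
    _ = #(T.sigma fun a => {b ∈ S 0 | eval (Fin.cons b a) f ≠ 0}) := (card_sigma _ _).symm
    _ ≤ #(nonvanishingPoints S f) := by
      refine card_le_card_of_injOn (fun p => Fin.cons p.2 p.1) ?_ ?_
      · rintro ⟨a, b⟩ hab
        simp only [coe_sigma, Set.mem_sigma_iff, mem_coe, mem_filter] at hab
        simp only [nonvanishingPoints, coe_filter, Set.mem_ofPred_eq,
          Fin.mem_piFinset_iff_zero_tail, Fin.cons_zero, Fin.tail_cons]
        exact ⟨⟨hab.2.1, (mem_filter.1 hab.1).1⟩, hab.2.2⟩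
      · rintro ⟨a, b⟩ - ⟨a', b'⟩ - h
        obtain ⟨rfl, rfl⟩ := Fin.cons_inj.1 h
        rfl

theorem exists_prod_le_card_nonvanishingPoints :
    ∀ {n : ℕ} (S : Fin n → Finset R) (f : MvPolynomial (Fin n) R), f ≠ 0 →
      (∀ i, f.degreeOf i < #(S i)) → ∀ N, n ≤ N → N + f.totalDegree ≤ ∑ i, #(S i) →
      ∃ y : Fin n → ℕ, (∀ i, 1 ≤ y i ∧ y i ≤ #(S i)) ∧ ∑ i, y i = N ∧
        ∏ i, y i ≤ #(nonvanishingPoints S f)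
  | 0, S, f, hf, _, N, _, hN => by
    obtain ⟨c, rfl⟩ := C_surjective (Fin 0) f
    rw [Ne, C_eq_zero] at hf
    refine ⟨Fin.elim0, fun i => i.elim0, by simp at hN ⊢; omega, ?_⟩
    rw [Fin.prod_univ_zero, one_le_card]
    exact ⟨default, by simp [nonvanishingPoints, hf]⟩
  | n + 1, S, f, hf, hdeg, N, hnN, hN => by
    set lc := (finSuccEquiv R n f).leadingCoeff
    have hlc : lc ≠ 0 := by simpa [lc] using hf
    have hlc_deg : lc.totalDegree + f.degreeOf 0 ≤ f.totalDegree := by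
      simpa [← natDegree_finSuccEquiv] using totalDegree_coeff_finSuccEquiv_add_le f _ hlc
    have hlc_degreeOf : ∀ i, lc.degreeOf i < #(Fin.tail S i) := fun i =>
      (degreeOf_coeff_finSuccEquiv f i _).trans_lt (hdeg i.succ)
    have hlc_room : lc.totalDegree + n ≤ ∑ i, #(Fin.tail S i) := calc
      lc.totalDegree + n ≤ ∑ i, (lc.degreeOf i + 1) := by
        rw [sum_add_distrib]; simpa using totalDegree_le_sum_degreeOf lc
      _ ≤ ∑ i, #(Fin.tail S i) := sum_le_sum fun i _ => hlc_degreeOf i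
    rw [Fin.sum_univ_succ] at hN
    have h0 := hdeg 0
    -- the largest first coordinate the fibre bound pays for, capped so that the other `n`
    -- coordinates can still be at least `1`
    set c := min (#(S 0) - f.degreeOf 0) (N - n)
    obtain ⟨y, hy, hsum, hprod⟩ := exists_prod_le_card_nonvanishingPoints (Fin.tail S) lc hlc
      hlc_degreeOf (N - c) (by omega) (by simp only [Fin.tail] at hlc_room ⊢; omega)
    refine ⟨Fin.cons c y, Fin.forall_fin_succ.2 ⟨by simp; omega, by simpa [Fin.tail] using hy⟩,
      by rw [Fin.sum_cons]; omega, ?_⟩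
    calc ∏ i, (Fin.cons c y : Fin (n + 1) → ℕ) i = c * ∏ i, y i := Fin.prod_cons _ _
      _ ≤ (#(S 0) - f.degreeOf 0) * #(nonvanishingPoints (Fin.tail S) lc) :=
        Nat.mul_le_mul (min_le_left _ _) hprod
      _ ≤ #(nonvanishingPoints S f) := by
        rw [mul_comm]; exact card_nonvanishingPoints_leadingCoeff_mul_le S f

end MvPolynomial

open MvPolynomial

theorem counting_from_existence_general
    {F : Type*} [Field F] (n mt : ℕ)
    (S : Finset F) (hS : S.card = mt + 1)
    (f : MvPolynomial (Fin n) F) (hf : f ≠ 0)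
    (hdeg : ∀ i, f.degreeOf i ≤ mt) :
    sInf {p : ℕ | ∃ y : Fin n → ℕ, (∀ i, 1 ≤ y i ∧ y i ≤ mt + 1) ∧
        (∑ i, y i) = n * (mt + 1) - f.totalDegree ∧ p = ∏ i, y i}
      ≤ {x : Fin n → F | (∀ i, x i ∈ S) ∧
          MvPolynomial.eval x f ≠ 0}.ncard := by
  classical
  have hD : f.totalDegree ≤ n * mt := by
    simpa using (totalDegree_le_sum_degreeOf f).trans (sum_le_sum fun i _ => hdeg i)
  have hgrid : n * (mt + 1) = ∑ _i : Fin n, #S := by simp [hS]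
  obtain ⟨y, hy, hsum, hprod⟩ := exists_prod_le_card_nonvanishingPoints (fun _ => S) f hf
    (fun i => hS ▸ Nat.lt_succ_of_le (hdeg i)) (n * (mt + 1) - f.totalDegree)
    (by rw [Nat.mul_succ]; omega) (by rw [← hgrid, Nat.mul_succ]; omega)
  have hcount : #(nonvanishingPoints (fun _ => S) f) =
      {x : Fin n → F | (∀ i, x i ∈ S) ∧ eval x f ≠ 0}.ncard := by
    rw [← Set.ncard_coe_finset]; congr; ext; simp [nonvanishingPoints]
  exact le_trans (Nat.sInf_le ⟨y, by simpa [hS] using hy, hsum, rfl⟩) (hcount ▸ hprod)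

/-- Theorem 2 (counting consequence of the existence theorem), polynomial
form.  If `f` is a nonzero polynomial in `n` variables over a field `F` whose
degree in every variable is at most `m_t`, and `S ⊆ F` has `|S| = m_t + 1`,
then the number of points of the uniform grid `S^n` at which `f` is nonzero is
at least `𝔪(m_t+1, …, m_t+1; n(m_t+1) - deg f)`, the minimum of `∏ y i` over
integer tuples with `1 ≤ y i ≤ m_t + 1` and `∑ y i = n(m_t+1) - deg f`. -/
theorem counting_from_existence
    {F : Type*} [Field F] (n mt : ℕ) (hn : 1 ≤ n) (hmt : 1 ≤ mt)
    (S : Finset F) (hS : S.card = mt + 1)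
    (f : MvPolynomial (Fin n) F) (hf : f ≠ 0)
    (hdeg : ∀ i, f.degreeOf i ≤ mt) :
    sInf {p : ℕ | ∃ y : Fin n → ℕ, (∀ i, 1 ≤ y i ∧ y i ≤ mt + 1) ∧
        (∑ i, y i) = n * (mt + 1) - f.totalDegree ∧ p = ∏ i, y i}
      ≤ {x : Fin n → F | (∀ i, x i ∈ S) ∧
          MvPolynomial.eval x f ≠ 0}.ncard :=
  counting_from_existence_general n mt S hS f hf hdeg
end

section
/- Let γ ≥ 2 and κ ≥ 2 be integers, let m_t ≥ (γ−1)(κ−1) be an integer, and let S ⊆ ℤ be a finite set with |S| = m_t + 1. Set D_4 = (γ(γ−1)/2)·(κ(κ−1)/2) and write D_4 = q·m_t + r with q ≥ 0 an integer and 0 ≤ r < m_t. Then the number of functions P : {0,…,γ−1} × {0,…,κ−1} → S such that for all i1 ≠ i2 in {0,…,γ−1} and all j1 ≠ j2 in {0,…,κ−1}, P(i1,j1) + P(i2,j2) ≠ P(i1,j2) + P(i2,j1), is at least (m_t+1)^{γκ−q} if r = 0, and at least (m_t+1−r)·(m_t+1)^{γκ−q−1} if r > 0. -/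
/-!
Fill the cells of the `γ × κ` matrix one at a time in an order compatible with the product
order. When cell `(i, j)` is filled, the 4-cycles in which it is the last corner are exactly those
through `(i', j)`, `(i, j')`, `(i', j')` with `i' < i`, `j' < j`, and each of them forbids a single
value; so at least `m_t + 1 - i j` values remain and the number of good matrices is at least
`∏ (m_t + 1 - i j)`. Since `0 ≤ i j ≤ m_t` and `∑ i j = D₄ = q m_t + r`, concavity of
`t ↦ log (m_t + 1 - t)` shows that this product is smallest when `q` of the factors are `1`, one
is `m_t + 1 - r` and the others are `m_t + 1`.
-/

open Finset Function

section Greedy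

variable {ι β : Type*} [Fintype ι] [DecidableEq ι] [DecidableEq β]

def avoidingAssignments (S : Finset β) (F : ι → (ι → β) → Finset β) (b : β)
    (s : Finset ι) : Finset (ι → β) :=
  {x ∈ Fintype.piFinset fun c => if c ∈ s then S else {b} | ∀ c ∈ s, x c ∉ F c x}

variable {S : Finset β} {F : ι → (ι → β) → Finset β} {b : β} {s : Finset ι}

lemma mem_avoidingAssignments {x : ι → β} :
    x ∈ avoidingAssignments S F b s ↔
      ∀ c, (c ∈ s → x c ∈ S ∧ x c ∉ F c x) ∧ (c ∉ s → x c = b) := by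
  simp only [avoidingAssignments, mem_filter, Fintype.mem_piFinset]
  constructor
  · rintro ⟨hval, havoid⟩ c
    have := hval c
    split_ifs at this with hc
    · exact ⟨fun _ => ⟨this, havoid c hc⟩, fun h => absurd hc h⟩
    · exact ⟨fun h => absurd h hc, fun _ => mem_singleton.mp this⟩
  · intro h
    refine ⟨fun c => ?_, fun c hc => ((h c).1 hc).2⟩
    split_ifs with hc
    · exact ((h c).1 hc).1
    · exact mem_singleton.mpr ((h c).2 hc)

variable [PartialOrder ι]

lemma update_mem_avoidingAssignments_iff
    (hlocal : ∀ c x y, (∀ d < c, x d = y d) → F c x = F c y)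
    {a : ι} (ha : Maximal (· ∈ s) a) {y : ι → β}
    (hy : y ∈ avoidingAssignments S F b (s.erase a)) (v : β) :
    update y a v ∈ avoidingAssignments S F b s ↔ v ∈ S \ F a y := by
  have hF_update : ∀ c ∈ s, F c (update y a v) = F c y := fun c hc =>
    hlocal c _ _ fun d hd => update_of_ne (by rintro rfl; exact ha.not_gt hc hd) _ _
  rw [mem_avoidingAssignments] at hy ⊢
  constructor
  · intro h
    simpa [hF_update a ha.prop] using (h a).1 ha.prop
  · rintro hv c
    rcases eq_or_ne c a with rfl | hca
    · exact ⟨fun _ => by simpa [hF_update c ha.prop] using hv, fun hc => absurd ha.prop hc⟩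
    · refine ⟨fun hc => ?_, fun hc => ?_⟩
      · simpa [hca, hF_update c hc] using (hy c).1 (mem_erase.mpr ⟨hca, hc⟩)
      · simpa [hca] using (hy c).2 (by simp [hc])

lemma mul_card_avoidingAssignments_erase_le (t : ι → ℕ) (hF : ∀ c x, #(F c x) ≤ t c)
    (hlocal : ∀ c x y, (∀ d < c, x d = y d) → F c x = F c y)
    {a : ι} (ha : Maximal (· ∈ s) a) :
    (#S - t a) * #(avoidingAssignments S F b (s.erase a)) ≤ #(avoidingAssignments S F b s) := by
  have hblank : ∀ y ∈ avoidingAssignments S F b (s.erase a), y a = b := fun y hy =>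
    ((mem_avoidingAssignments.mp hy) a).2 (by simp)
  calc (#S - t a) * #(avoidingAssignments S F b (s.erase a))
      = ∑ _y ∈ avoidingAssignments S F b (s.erase a), (#S - t a) := by
        rw [sum_const, smul_eq_mul, mul_comm]
    _ ≤ ∑ y ∈ avoidingAssignments S F b (s.erase a), #(S \ F a y) := sum_le_sum fun y _ =>
        (Nat.sub_le_sub_left (hF a y) _).trans (le_card_sdiff _ _)
    _ = #((avoidingAssignments S F b (s.erase a)).sigma fun y => S \ F a y) :=
        (card_sigma _ _).symm
    _ ≤ _ := by
      refine card_le_card_of_injOn (fun p => update p.1 a p.2)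
        (fun ⟨y, v⟩ h => ?_) (fun ⟨y, v⟩ h ⟨y', v'⟩ h' heq => ?_)
      · simp only [coe_sigma, Set.mem_sigma_iff, mem_coe] at h
        exact (update_mem_avoidingAssignments_iff hlocal ha h.1 v).mpr h.2
      · simp only [coe_sigma, Set.mem_sigma_iff, mem_coe] at h h'
        obtain rfl : v = v' := by simpa using congrFun heq a
        obtain rfl : y = y' := calc
          y = update (update y a v) a b := by
            rw [update_idem, ← hblank y h.1, update_eq_self]
          _ = update (update y' a v) a b := congrArg (update · a b) heq
          _ = y' := by rw [update_idem, ← hblank y' h'.1, update_eq_self]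
        rfl

lemma prod_card_sub_le_card_avoidingAssignments (t : ι → ℕ) (hF : ∀ c x, #(F c x) ≤ t c)
    (hlocal : ∀ c x y, (∀ d < c, x d = y d) → F c x = F c y)
    (s : Finset ι) (hs : IsLowerSet (s : Set ι)) :
    ∏ c ∈ s, (#S - t c) ≤ #(avoidingAssignments S F b s) := by
  induction s using Finset.strongInduction with
  | H s ih =>
  obtain rfl | hne := s.eq_empty_or_nonempty
  · exact card_pos.mpr ⟨fun _ => b, by simp [mem_avoidingAssignments]⟩
  obtain ⟨a, ha⟩ := s.exists_maximal hne
  have hlower : IsLowerSet ((s.erase a : Finset ι) : Set ι) := fun c d hdc hc => by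
    simp only [coe_erase, Set.mem_sdiff, mem_coe, Set.mem_singleton_iff] at hc ⊢
    exact ⟨hs hdc hc.1, by rintro rfl; exact ha.not_gt hc.1 (lt_of_le_of_ne hdc (Ne.symm hc.2))⟩
  calc ∏ c ∈ s, (#S - t c) = (#S - t a) * ∏ c ∈ s.erase a, (#S - t c) :=
        (mul_prod_erase s _ ha.prop).symm
    _ ≤ (#S - t a) * #(avoidingAssignments S F b (s.erase a)) :=
        Nat.mul_le_mul_left _ (ih _ (erase_ssubset ha.prop) hlower)
    _ ≤ #(avoidingAssignments S F b s) := mul_card_avoidingAssignments_erase_le t hF hlocal ha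

end Greedy

theorem prod_card_sub_le_ncard_avoiding {ι β : Type*} [Fintype ι] [PartialOrder ι]
    [Nonempty β] (S : Finset β) (F : ι → (ι → β) → Finset β) (t : ι → ℕ)
    (hF : ∀ c x, #(F c x) ≤ t c)
    (hlocal : ∀ c x y, (∀ d < c, x d = y d) → F c x = F c y) :
    ∏ c, (#S - t c) ≤ {x : ι → β | ∀ c, x c ∈ S ∧ x c ∉ F c x}.ncard := by
  classical
  obtain ⟨b⟩ := ‹Nonempty β›
  convert prod_card_sub_le_card_avoidingAssignments (b := b) t hF hlocal univ
    (by simpa using isLowerSet_univ)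
  rw [← Set.ncard_coe_finset]
  congr 1
  ext x
  simp [mem_avoidingAssignments]

def IsFourCycleFree {α β G : Type*} [Add G] (P : α → β → G) : Prop :=
  ∀ i1 i2 j1 j2, i1 ≠ i2 → j1 ≠ j2 → P i1 j1 + P i2 j2 ≠ P i1 j2 + P i2 j1

lemma isFourCycleFree_iff_lt {α β G : Type*} [LinearOrder α] [LinearOrder β] [AddCommMagma G]
    {P : α → β → G} :
    IsFourCycleFree P ↔
      ∀ i1 i2 j1 j2, i1 < i2 → j1 < j2 → P i1 j1 + P i2 j2 ≠ P i1 j2 + P i2 j1 := by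
  refine ⟨fun h i1 i2 j1 j2 hi hj => h i1 i2 j1 j2 hi.ne hj.ne, fun h i1 i2 j1 j2 hi hj => ?_⟩
  rcases hi.lt_or_gt with hi | hi <;> rcases hj.lt_or_gt with hj | hj
  · exact h i1 i2 j1 j2 hi hj
  · simpa [add_comm, eq_comm] using h i1 i2 j2 j1 hi hj
  · simpa [add_comm, eq_comm] using h i2 i1 j1 j2 hi hj
  · simpa [add_comm] using h i2 i1 j2 j1 hi hj

section ClosingValues

variable {γ κ : ℕ} {G : Type*} [AddCommGroup G] [DecidableEq G]

/-- The values at `c` that would close a 4-cycle in which `c` is the largest of the four cells. -/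
def closingValues (c : Fin γ × Fin κ) (x : Fin γ × Fin κ → G) : Finset G :=
  (Iio c.1 ×ˢ Iio c.2).image fun p => x (p.1, c.2) + x (c.1, p.2) - x p

lemma card_closingValues_le (c : Fin γ × Fin κ) (x : Fin γ × Fin κ → G) :
    #(closingValues c x) ≤ c.1 * c.2 :=
  card_image_le.trans (by rw [card_product, Fin.card_Iio, Fin.card_Iio])

lemma closingValues_congr {c : Fin γ × Fin κ} {x y : Fin γ × Fin κ → G}
    (h : ∀ d < c, x d = y d) : closingValues c x = closingValues c y := by
  refine image_congr fun p hp => ?_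
  simp only [coe_product, Set.mem_prod, coe_Iio, Set.mem_Iio] at hp
  simp only [h (p.1, c.2) (Prod.lt_iff.mpr (Or.inl ⟨hp.1, le_rfl⟩)),
    h (c.1, p.2) (Prod.lt_iff.mpr (Or.inr ⟨le_rfl, hp.2⟩)),
    h p (Prod.lt_iff.mpr (Or.inl ⟨hp.1, hp.2.le⟩))]

lemma notMem_closingValues_iff {c : Fin γ × Fin κ} {x : Fin γ × Fin κ → G} :
    x c ∉ closingValues c x ↔
      ∀ i < c.1, ∀ j < c.2, x (i, j) + x c ≠ x (i, c.2) + x (c.1, j) := by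
  simp only [closingValues, mem_image, mem_product, mem_Iio, Prod.exists, not_exists, not_and]
  exact forall_congr' fun i =>
    ⟨fun h hi j hj heq => h j ⟨hi, hj⟩ (sub_eq_of_eq_add' heq.symm),
      fun h j hij heq => h hij.1 j hij.2 (eq_add_of_sub_eq' heq).symm⟩

lemma isFourCycleFree_curry_iff {x : Fin γ × Fin κ → G} :
    IsFourCycleFree (curry x) ↔ ∀ c, x c ∉ closingValues c x := by
  simp only [isFourCycleFree_iff_lt, notMem_closingValues_iff, Prod.forall, curry_apply]
  exact ⟨fun h i2 j2 i1 hi j1 hj => h i1 i2 j1 j2 hi hj,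
    fun h i1 i2 j1 j2 hi hj => h i2 j2 i1 hi j1 hj⟩

end ClosingValues

/-- `∏ (m + 1 - t_k)` over `n` entries of which `q` equal `m`, one equals `r` and the others
are `0`; the two branches differ only when `n = q`. -/
def extremalProduct (m n q r : ℕ) : ℕ :=
  if r = 0 then (m + 1) ^ (n - q) else (m + 1 - r) * (m + 1) ^ (n - q - 1)

lemma pow_le_mul_pow_sub_one (m e : ℕ) : (m + 1) ^ e ≤ (m + 1) * (m + 1) ^ (e - 1) := by
  rw [← pow_succ']
  exact Nat.pow_le_pow_right m.succ_pos (by omega)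

lemma extremalProduct_succ_le_of_le {m n q r t : ℕ} (htr : t ≤ r) (hr : r < m) :
    extremalProduct m (n + 1) q r ≤ (m + 1 - t) * extremalProduct m n q (r - t) := by
  have hsplit : (m + 1 - r) * (m + 1) ≤ (m + 1 - t) * (m + 1 - (r - t)) := by
    zify [htr, hr.le, (by omega : r - t ≤ m + 1), (by omega : r ≤ m + 1),
      (by omega : t ≤ m + 1)]
    nlinarith
  unfold extremalProduct
  split_ifs with hr0 hrt0 hrt0
  · obtain rfl : t = 0 := by omega
    calc (m + 1) ^ (n + 1 - q) ≤ (m + 1) ^ (n - q + 1) :=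
          Nat.pow_le_pow_right m.succ_pos (by omega)
      _ = _ := by rw [pow_succ', Nat.sub_zero]
  · omega
  · obtain rfl : t = r := by omega
    rw [show n + 1 - q - 1 = n - q by omega]
  · calc (m + 1 - r) * (m + 1) ^ (n + 1 - q - 1)
        ≤ (m + 1 - r) * ((m + 1) * (m + 1) ^ (n - q - 1)) := by
          rw [show n + 1 - q - 1 = n - q by omega]
          exact Nat.mul_le_mul_left _ (pow_le_mul_pow_sub_one m _)
      _ ≤ (m + 1 - t) * (m + 1 - (r - t)) * (m + 1) ^ (n - q - 1) := by
          rw [← mul_assoc]; exact Nat.mul_le_mul_right _ hsplit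
      _ = _ := mul_assoc _ _ _

lemma extremalProduct_succ_le_of_lt {m n q r t : ℕ} (hrt : r < t) (htm : t ≤ m) :
    extremalProduct m (n + 1) (q + 1) r ≤ (m + 1 - t) * extremalProduct m n q (m + r - t) := by
  have hsplit : m + 1 - r ≤ (m + 1 - t) * (m + 1 - (m + r - t)) := by
    zify [hrt.le, htm, (by omega : t ≤ m + r), (by omega : m + r - t ≤ m + 1),
      (by omega : r ≤ m + 1), (by omega : t ≤ m + 1)]
    nlinarith
  unfold extremalProduct
  split_ifs with hr0 hmrt0 hmrt0
  · rw [show m + 1 - t = 1 by omega, one_mul, show n + 1 - (q + 1) = n - q by omega]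
  · subst hr0
    calc (m + 1) ^ (n + 1 - (q + 1)) ≤ (m + 1) * (m + 1) ^ (n - q - 1) := by
          rw [show n + 1 - (q + 1) = n - q by omega]; exact pow_le_mul_pow_sub_one m _
      _ ≤ (m + 1 - t) * (m + 1 - (m + 0 - t)) * (m + 1) ^ (n - q - 1) :=
          Nat.mul_le_mul_right _ (by simpa using hsplit)
      _ = _ := mul_assoc _ _ _
  · omega
  · calc (m + 1 - r) * (m + 1) ^ (n + 1 - (q + 1) - 1)
        = (m + 1 - r) * (m + 1) ^ (n - q - 1) := by rw [show n + 1 - (q + 1) = n - q by omega]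
      _ ≤ (m + 1 - t) * (m + 1 - (m + r - t)) * (m + 1) ^ (n - q - 1) :=
          Nat.mul_le_mul_right _ hsplit
      _ = _ := mul_assoc _ _ _

theorem extremalProduct_le_prod {ι : Type*} {m : ℕ} (s : Finset ι) (t : ι → ℕ)
    (ht : ∀ c ∈ s, t c ≤ m) {q r : ℕ} (hr : r < m) (hsum : ∑ c ∈ s, t c = q * m + r) :
    extremalProduct m #s q r ≤ ∏ c ∈ s, (m + 1 - t c) := by
  classical
  induction s using Finset.induction_on generalizing q r with
  | empty =>
    obtain ⟨rfl, rfl⟩ : q = 0 ∧ r = 0 := by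
      simp only [sum_empty] at hsum
      exact ⟨by nlinarith [Nat.zero_le q], by omega⟩
    simp [extremalProduct]
  | insert a s ha ih =>
    rw [sum_insert ha] at hsum
    rw [card_insert_of_notMem ha, prod_insert ha]
    have hts : ∀ c ∈ s, t c ≤ m := fun c hc => ht c (mem_insert_of_mem hc)
    have hta : t a ≤ m := ht a (mem_insert_self a s)
    rcases le_or_gt (t a) r with htr | hrt
    · calc extremalProduct m (#s + 1) q r ≤ (m + 1 - t a) * extremalProduct m #s q (r - t a) :=
            extremalProduct_succ_le_of_le htr hr
        _ ≤ _ := Nat.mul_le_mul_left _ (ih hts (by omega) (by omega))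
    · obtain ⟨q, rfl⟩ : ∃ q', q = q' + 1 :=
        Nat.exists_eq_succ_of_ne_zero (by rintro rfl; omega)
      calc extremalProduct m (#s + 1) (q + 1) r
          ≤ (m + 1 - t a) * extremalProduct m #s q (m + r - t a) :=
            extremalProduct_succ_le_of_lt hrt hta
        _ ≤ _ := Nat.mul_le_mul_left _ (ih hts (by omega) (by rw [add_mul] at hsum; omega))

lemma sum_fin_mul_fin (γ κ : ℕ) :
    ∑ c : Fin γ × Fin κ, (c.1 : ℕ) * c.2 = (γ * (γ - 1) / 2) * (κ * (κ - 1) / 2) := by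
  rw [Fintype.sum_prod_type, ← sum_mul_sum, Fin.sum_univ_eq_sum_range (fun i => i),
    Fin.sum_univ_eq_sum_range (fun i => i), sum_range_id, sum_range_id]

lemma ncard_setOf_closingValues_eq {γ κ : ℕ} {G : Type*} [AddCommGroup G] [DecidableEq G]
    (S : Finset G) :
    {x : Fin γ × Fin κ → G | ∀ c, x c ∈ S ∧ x c ∉ closingValues c x}.ncard =
      {P : Fin γ → Fin κ → G | (∀ i j, P i j ∈ S) ∧ IsFourCycleFree P}.ncard := by
  have hpre : {x : Fin γ × Fin κ → G | ∀ c, x c ∈ S ∧ x c ∉ closingValues c x} =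
      curry ⁻¹' {P | (∀ i j, P i j ∈ S) ∧ IsFourCycleFree P} := by
    ext x
    simp only [Set.mem_ofPred_eq, Set.mem_preimage, forall_and, isFourCycleFree_curry_iff,
      Prod.forall, curry_apply]
  rw [hpre]
  exact Set.ncard_preimage_of_injective_subset_range curry_injective
    fun P _ => ⟨uncurry P, curry_uncurry P⟩

theorem counting_four_cycle_free_assignments_general
    (γ κ mt : ℕ)
    (hmt : (γ - 1) * (κ - 1) ≤ mt)
    (S : Finset ℤ) (hS : S.card = mt + 1)
    (q r : ℕ)
    (hqr : (γ * (γ - 1) / 2) * (κ * (κ - 1) / 2) = q * mt + r)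
    (hr : r < mt) :
    (if r = 0 then (mt + 1) ^ (γ * κ - q)
      else (mt + 1 - r) * (mt + 1) ^ (γ * κ - q - 1))
      ≤ {P : Fin γ → Fin κ → ℤ | (∀ i j, P i j ∈ S) ∧
          ∀ i1 i2 : Fin γ, ∀ j1 j2 : Fin κ, i1 ≠ i2 → j1 ≠ j2 →
            P i1 j1 + P i2 j2 ≠ P i1 j2 + P i2 j1}.ncard := by
  have hcell : ∀ c : Fin γ × Fin κ, (c.1 : ℕ) * c.2 ≤ mt := fun c =>
    (Nat.mul_le_mul (Nat.le_sub_one_of_lt c.1.isLt) (Nat.le_sub_one_of_lt c.2.isLt)).trans hmt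
  calc _ = extremalProduct mt #(univ : Finset (Fin γ × Fin κ)) q r := by
        simp [extremalProduct]
    _ ≤ ∏ c : Fin γ × Fin κ, (mt + 1 - c.1 * c.2) :=
        extremalProduct_le_prod _ _ (fun c _ => hcell c) hr (by rw [sum_fin_mul_fin, hqr])
    _ ≤ {x : Fin γ × Fin κ → ℤ | ∀ c, x c ∈ S ∧ x c ∉ closingValues c x}.ncard :=
        hS ▸ prod_card_sub_le_ncard_avoiding S closingValues _ card_closingValues_le
          fun _ _ _ => closingValues_congr
    _ = _ := ncard_setOf_closingValues_eq S

/-- Corollary 4 (counting assignments eliminating all 4-cycles).  For the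
fully connected `γ × κ` base graph, a value set `S ⊆ ℤ` with
`|S| = m_t + 1`, `m_t ≥ (γ-1)(κ-1)`, and `D₄ = C(γ,2)·C(κ,2) = q·m_t + r`
with `0 ≤ r < m_t`, the number of partition matrices `P` with values in `S`
destroying all 4-cycle candidates is at least `(m_t+1)^(γκ-q)` if `r = 0`
and `(m_t+1-r)(m_t+1)^(γκ-q-1)` if `r > 0`. -/
theorem counting_four_cycle_free_assignments
    (γ κ mt : ℕ) (hγ : 2 ≤ γ) (hκ : 2 ≤ κ)
    (hmt : (γ - 1) * (κ - 1) ≤ mt)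
    (S : Finset ℤ) (hS : S.card = mt + 1)
    (q r : ℕ)
    (hqr : (γ * (γ - 1) / 2) * (κ * (κ - 1) / 2) = q * mt + r)
    (hr : r < mt) :
    (if r = 0 then (mt + 1) ^ (γ * κ - q)
      else (mt + 1 - r) * (mt + 1) ^ (γ * κ - q - 1))
      ≤ {P : Fin γ → Fin κ → ℤ | (∀ i j, P i j ∈ S) ∧
          ∀ i1 i2 : Fin γ, ∀ j1 j2 : Fin κ, i1 ≠ i2 → j1 ≠ j2 →
            P i1 j1 + P i2 j2 ≠ P i1 j2 + P i2 j1}.ncard :=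
  counting_four_cycle_free_assignments_general γ κ mt hmt S hS q r hqr hr
end
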